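/- arXiv:1706.01198 — 4 statements merged into one kernel-verified Lean document; each statement's English description precedes it below -/
import Mathlib

section
/- Let n ≥ 1, N ≥ 1, let λ : Fin n → ℝ satisfy λ_i > 0 for all i and ∑_i λ_i = 1, and let p : Fin n → Fin N → EuclideanSpace ℝ (Fin 3) be a family of unit vectors (‖p i α‖ = 1 for all i, α). Then ∑_{i,j} λ_i λ_j ∏_α (1 + ⟪p i α, p j α⟫)/2 ≤ 1, and equality holds if and only if p i α = p j α for all i, j, α. -/
open scoped RealInnerProductSpace

/-- For a convex combination with positive weights `λ_i` and unit vectors `p i α ∈ ℝ³`,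
`∑_{i,j} λ_i λ_j ∏_α (1 + ⟪p i α, p j α⟫)/2 ≤ 1`, with equality iff all the `p i α`
coincide across `i` (for each `α`). -/
theorem purity_sum_le_one (n N : ℕ) (hn : 1 ≤ n) (hN : 1 ≤ N)
    (lam : Fin n → ℝ) (hpos : ∀ i, 0 < lam i) (hsum : ∑ i, lam i = 1)
    (p : Fin n → Fin N → EuclideanSpace ℝ (Fin 3))
    (hunit : ∀ i α, ‖p i α‖ = 1) :
    (∑ i, ∑ j, lam i * lam j * ∏ α, (1 + ⟪p i α, p j α⟫) / 2) ≤ 1 ∧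
    ((∑ i, ∑ j, lam i * lam j * ∏ α, (1 + ⟪p i α, p j α⟫) / 2) = 1 ↔
      ∀ i j α, p i α = p j α) := by
  have hinner_le : ∀ i j α, ⟪p i α, p j α⟫ ≤ 1 := by
    intro i j α
    have := real_inner_le_norm (p i α) (p j α)
    rwa [hunit, hunit, one_mul] at this
  have hinner_ge : ∀ i j α, -1 ≤ ⟪p i α, p j α⟫ := by
    intro i j α
    have := abs_real_inner_le_norm (p i α) (p j α)
    rw [hunit, hunit, one_mul] at this
    linarith [abs_le.mp this |>.1]
  set f : Fin n → Fin n → ℝ := fun i j => ∏ α, (1 + ⟪p i α, p j α⟫) / 2 with hf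
  have hfac0 : ∀ i j α, (0:ℝ) ≤ (1 + ⟪p i α, p j α⟫) / 2 := by
    intro i j α; linarith [hinner_ge i j α]
  have hfac1 : ∀ i j α, (1 + ⟪p i α, p j α⟫) / 2 ≤ 1 := by
    intro i j α; linarith [hinner_le i j α]
  have hf0 : ∀ i j, 0 ≤ f i j := fun i j =>
    Finset.prod_nonneg fun α _ => hfac0 i j α
  have hf1 : ∀ i j, f i j ≤ 1 := fun i j =>
    Finset.prod_le_one (fun α _ => hfac0 i j α) (fun α _ => hfac1 i j α)
  have hsum2 : (∑ i, ∑ j, lam i * lam j) = 1 := by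
    rw [← Finset.sum_mul_sum, hsum, one_mul]
  have hterm_le : ∀ i j, lam i * lam j * f i j ≤ lam i * lam j := by
    intro i j
    exact mul_le_of_le_one_right (mul_nonneg (hpos i).le (hpos j).le) (hf1 i j)
  have hle : (∑ i, ∑ j, lam i * lam j * f i j) ≤ 1 := by
    rw [← hsum2]
    exact Finset.sum_le_sum fun i _ => Finset.sum_le_sum fun j _ => hterm_le i j
  refine ⟨hle, ?_, ?_⟩
  · -- equality implies all equal
    intro heq
    by_contra hcon
    push_neg at hcon
    obtain ⟨i₀, j₀, α₀, hne⟩ := hcon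
    have hlt : ⟪p i₀ α₀, p j₀ α₀⟫ < 1 :=
      lt_of_le_of_ne (hinner_le i₀ j₀ α₀)
        (fun h => hne ((inner_eq_one_iff_of_norm_eq_one (hunit i₀ α₀) (hunit j₀ α₀)).mp h))
    have hflt : f i₀ j₀ < 1 := by
      have h1 : f i₀ j₀ = (1 + ⟪p i₀ α₀, p j₀ α₀⟫) / 2 *
          ∏ α ∈ Finset.univ.erase α₀, (1 + ⟪p i₀ α, p j₀ α⟫) / 2 := by
        rw [hf]
        exact (Finset.mul_prod_erase Finset.univ _ (Finset.mem_univ α₀)).symm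
      have h2 : ∏ α ∈ Finset.univ.erase α₀, (1 + ⟪p i₀ α, p j₀ α⟫) / 2 ≤ 1 :=
        Finset.prod_le_one (fun α _ => hfac0 i₀ j₀ α) (fun α _ => hfac1 i₀ j₀ α)
      have h3 : (0:ℝ) ≤ ∏ α ∈ Finset.univ.erase α₀, (1 + ⟪p i₀ α, p j₀ α⟫) / 2 :=
        Finset.prod_nonneg fun α _ => hfac0 i₀ j₀ α
      calc f i₀ j₀ = _ := h1
        _ ≤ (1 + ⟪p i₀ α₀, p j₀ α₀⟫) / 2 * 1 := by
            apply mul_le_mul_of_nonneg_left h2 (hfac0 i₀ j₀ α₀)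
        _ < 1 := by linarith [hfac1 i₀ j₀ α₀, hlt]
    have hstrict : (∑ i, ∑ j, lam i * lam j * f i j) < ∑ i, ∑ j, lam i * lam j := by
      rw [← Finset.sum_product', ← Finset.sum_product']
      apply Finset.sum_lt_sum (fun q _ => hterm_le q.1 q.2)
      refine ⟨(i₀, j₀), Finset.mem_univ _, ?_⟩
      have := mul_pos (hpos i₀) (hpos j₀)
      calc lam i₀ * lam j₀ * f i₀ j₀ < lam i₀ * lam j₀ * 1 := by
            exact mul_lt_mul_of_pos_left hflt this
        _ = lam i₀ * lam j₀ := mul_one _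
    rw [heq, hsum2] at hstrict
    exact lt_irrefl _ hstrict
  · intro hall
    have : ∀ i j, f i j = 1 := by
      intro i j
      rw [hf]
      apply Finset.prod_eq_one
      intro α _
      have : ⟪p i α, p j α⟫ = 1 :=
        (inner_eq_one_iff_of_norm_eq_one (hunit i α) (hunit j α)).mpr (hall i j α)
      rw [this]; norm_num
    calc (∑ i, ∑ j, lam i * lam j * f i j)
        = ∑ i, ∑ j, lam i * lam j := by
          apply Finset.sum_congr rfl; intro i _
          apply Finset.sum_congr rfl; intro j _
          rw [this i j, mul_one]
      _ = 1 := hsum2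
end

section
/- (Proposition 1, mixedness) Let N ≥ 1, n ≥ 2, let λ : Fin n → ℝ satisfy λ_i > 0 and ∑_i λ_i = 1, and let p : Fin n → Fin N → EuclideanSpace ℝ (Fin 3) be unit vectors. Let ρ be the N-qubit matrix ρ = ∑_i λ_i M_i, where M_i is the N-fold Kronecker product with entries M_i f g = ∏_α ρ_{p i α} (f α) (g α). If there exist indices i ≠ j and α with p i α ≠ p j α, then trace(ρ * ρ) < 1, i.e. ρ is a mixed state. -/
/-!
For product states the trace of `ρ_p ρ_q` factorises over the qubits into
`∏_α (1 + ⟪p α, q α⟫) / 2`; for unit Bloch vectors each factor lies in `[0, 1]` by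
Cauchy–Schwarz, and is `< 1` exactly when `p α ≠ q α`. Hence `tr ρ² = ∑ λ_a λ_b tr(ρ_a ρ_b)`
is a convex combination of numbers `≤ 1` in which the term `(i, j)`, of positive weight, is `< 1`.
-/

open Matrix

/-- The Bloch matrix `ρ_p = (1/2)(I + p₁σx + p₂σy + p₃σz)` of a vector `p ∈ ℝ³`. -/
noncomputable def blochMat (p : EuclideanSpace ℝ (Fin 3)) : Matrix (Fin 2) (Fin 2) ℂ :=
  (1 / 2 : ℂ) • ((1 : Matrix (Fin 2) (Fin 2) ℂ)
    + (p 0 : ℂ) • !![0, 1; 1, 0]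
    + (p 1 : ℂ) • !![0, -Complex.I; Complex.I, 0]
    + (p 2 : ℂ) • !![1, 0; 0, -1])

/-- The N-fold Kronecker product of the Bloch matrices of `p α`, `α : Fin N`, as an
N-qubit matrix indexed by `Fin N → Fin 2`. -/
noncomputable def prodState {N : ℕ} (p : Fin N → EuclideanSpace ℝ (Fin 3)) :
    Matrix (Fin N → Fin 2) (Fin N → Fin 2) ℂ :=
  Matrix.of fun f g => ∏ α, blochMat (p α) (f α) (g α)

namespace Matrix

variable {ι κ R : Type*} [Fintype ι] [DecidableEq ι] [Fintype κ] [CommSemiring R]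

def piKronecker (A : ι → Matrix κ κ R) : Matrix (ι → κ) (ι → κ) R :=
  of fun f g => ∏ i, A i (f i) (g i)

theorem piKronecker_mul (A B : ι → Matrix κ κ R) :
    piKronecker A * piKronecker B = piKronecker fun i => A i * B i := by
  ext f g
  simp only [piKronecker, mul_apply, of_apply, ← Finset.prod_mul_distrib]
  exact (Fintype.prod_sum fun i k => A i (f i) k * B i k (g i)).symm

theorem trace_piKronecker (A : ι → Matrix κ κ R) :
    (piKronecker A).trace = ∏ i, (A i).trace := by
  simp only [trace, diag, piKronecker, of_apply]
  exact (Fintype.prod_sum fun i k => A i k k).symm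

end Matrix

open scoped RealInnerProductSpace

theorem trace_blochMat_mul (p q : EuclideanSpace ℝ (Fin 3)) :
    (blochMat p * blochMat q).trace = (((1 + ⟪p, q⟫) / 2 : ℝ) : ℂ) := by
  have hinner : ⟪p, q⟫ = p 0 * q 0 + p 1 * q 1 + p 2 * q 2 := by
    simp [PiLp.inner_apply, Fin.sum_univ_three, mul_comm]
  rw [hinner]
  simp [blochMat, trace_fin_two, mul_apply, Fin.sum_univ_two, one_apply]
  linear_combination (-(p 1 * q 1 : ℂ) / 2) * Complex.I_sq

section Overlap

variable {ι F : Type*} [Fintype ι] [NormedAddCommGroup F] [InnerProductSpace ℝ F]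

noncomputable def overlap (p q : ι → F) : ℝ := ∏ α, (1 + ⟪p α, q α⟫) / 2

variable {p q : ι → F}

theorem overlap_le_one (hp : ∀ α, ‖p α‖ = 1) (hq : ∀ α, ‖q α‖ = 1) : overlap p q ≤ 1 :=
  Finset.prod_le_one
    (fun α _ => by linarith [neg_one_le_real_inner_of_norm_eq_one (hp α) (hq α)])
    (fun α _ => by linarith [real_inner_le_one_of_norm_eq_one (hp α) (hq α)])

theorem overlap_lt_one (hp : ∀ α, ‖p α‖ = 1) (hq : ∀ α, ‖q α‖ = 1) (hne : p ≠ q) :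
    overlap p q < 1 := by
  obtain ⟨α, hα⟩ := Function.ne_iff.mp hne
  have hlt : ⟪p α, q α⟫ < 1 := (inner_lt_one_iff_real_of_norm_eq_one (hp α) (hq α)).mpr hα
  calc overlap p q ≤ ∏ β ∈ {α}, (1 + ⟪p β, q β⟫) / 2 :=
        Finset.prod_le_prod_of_subset_of_le_one (Finset.subset_univ _)
          (fun β _ => by linarith [neg_one_le_real_inner_of_norm_eq_one (hp β) (hq β)])
          (fun β _ _ => by linarith [real_inner_le_one_of_norm_eq_one (hp β) (hq β)])
    _ < 1 := by rw [Finset.prod_singleton]; linarith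

end Overlap

theorem trace_prodState_mul {N : ℕ} (p q : Fin N → EuclideanSpace ℝ (Fin 3)) :
    (prodState p * prodState q).trace = (overlap p q : ℂ) := by
  change (piKronecker (blochMat ∘ p) * piKronecker (blochMat ∘ q)).trace = _
  rw [piKronecker_mul, trace_piKronecker, overlap, Complex.ofReal_prod]
  exact Finset.prod_congr rfl fun α _ => trace_blochMat_mul _ _

theorem trace_sq_sum_smul_prodState {ι : Type*} [Fintype ι] {N : ℕ} (w : ι → ℝ)
    (p : ι → Fin N → EuclideanSpace ℝ (Fin 3)) :
    ((∑ a, (w a : ℂ) • prodState (p a)) * ∑ a, (w a : ℂ) • prodState (p a)).trace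
      = ((∑ a, ∑ b, w a * w b * overlap (p a) (p b) : ℝ) : ℂ) := by
  simp only [Finset.sum_mul_sum, trace_sum, smul_mul_smul_comm, trace_smul, smul_eq_mul,
    trace_prodState_mul]
  push_cast
  rfl

theorem sum_sum_mul_mul_lt_one {ι : Type*} [Fintype ι] {w : ι → ℝ} {T : ι → ι → ℝ}
    (hw : ∀ a, 0 ≤ w a) (hsum : ∑ a, w a = 1) (hT : ∀ a b, T a b ≤ 1) {i j : ι}
    (hi : 0 < w i) (hj : 0 < w j) (hTij : T i j < 1) :
    ∑ a, ∑ b, w a * w b * T a b < 1 := by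
  have hone : ∑ a, ∑ b, w a * w b = 1 := by rw [← Finset.sum_mul_sum, hsum, one_mul]
  rw [← hone, ← Finset.sum_product', ← Finset.sum_product']
  refine Finset.sum_lt_sum (fun x _ => ?_) ⟨(i, j), Finset.mem_univ _, ?_⟩
  · exact mul_le_of_le_one_right (mul_nonneg (hw _) (hw _)) (hT _ _)
  · exact mul_lt_of_lt_one_right (mul_pos hi hj) hTij

theorem separable_state_is_mixed_general (N n : ℕ)
    (lam : Fin n → ℝ) (hpos : ∀ i, 0 < lam i) (hsum : ∑ i, lam i = 1)
    (p : Fin n → Fin N → EuclideanSpace ℝ (Fin 3))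
    (hunit : ∀ i α, ‖p i α‖ = 1)
    (i j : Fin n) (α : Fin N) (hp : p i α ≠ p j α) :
    (Matrix.trace
        ((∑ i, (lam i : ℂ) • prodState (p i)) * (∑ i, (lam i : ℂ) • prodState (p i)))).re
      < 1 := by
  rw [trace_sq_sum_smul_prodState, Complex.ofReal_re]
  exact sum_sum_mul_mul_lt_one (fun a => (hpos a).le) hsum
    (fun a b => overlap_le_one (hunit a) (hunit b)) (hpos i) (hpos j)
    (overlap_lt_one (hunit i) (hunit j) (Function.ne_iff.mpr ⟨α, hp⟩))

/-- (Proposition 1, mixedness.) A fully separable N-qubit state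
`ρ = ∑_i λ_i ρ_{p i 1} ⊗ ⋯ ⊗ ρ_{p i N}` with positive weights, unit Bloch vectors, and at
least two genuinely different product terms satisfies `trace(ρ²) < 1`, i.e. it is mixed. -/
theorem separable_state_is_mixed (N n : ℕ) (hN : 1 ≤ N) (hn : 2 ≤ n)
    (lam : Fin n → ℝ) (hpos : ∀ i, 0 < lam i) (hsum : ∑ i, lam i = 1)
    (p : Fin n → Fin N → EuclideanSpace ℝ (Fin 3))
    (hunit : ∀ i α, ‖p i α‖ = 1)
    (i j : Fin n) (α : Fin N) (hij : i ≠ j) (hp : p i α ≠ p j α) :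
    (Matrix.trace
        ((∑ i, (lam i : ℂ) • prodState (p i)) * (∑ i, (lam i : ℂ) • prodState (p i)))).re
      < 1 :=
  separable_state_is_mixed_general N n lam hpos hsum p hunit i j α hp
end

section
/- Let p, q ∈ EuclideanSpace ℝ (Fin 3) and let σ = (ρ_p ⊗ ρ_q + ρ_q ⊗ ρ_p)/2. Let U be the 4×4 matrix with rows (1,0,0,0), (0, 1/√2, 1/√2, 0), (0,0,0,1), (0, 1/√2, −1/√2, 0). Then U * σ * Uᴴ is block diagonal: its fourth row and fourth column vanish except for the (4,4) entry, which equals (1 − ⟪p, q⟫)/4, and its upper-left 3×3 block has entries (in terms of p_± = p₁ ± i p₂, q_± = q₁ ± i q₂, p_z = p₃, q_z = q₃): (1,1) = (1+q_z)(1+p_z)/4, (1,2) = (q_−(1+p_z) + p_−(1+q_z))/(4√2), (1,3) = p_− q_− /4, (2,2) = (1 − p_z q_z + p₁q₁ + p₂q₂)/4, (2,3) = (p_−(1−q_z) + q_−(1−p_z))/(4√2), (3,3) = (1−q_z)(1−p_z)/4, with the remaining entries determined by Hermiticity. -/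
/-!
The exchange of the two qubits (`swapMat`) commutes with `ρ_p ⊗ ρ_q + ρ_q ⊗ ρ_p`, hence with `σ`.
Swapping the columns of `angU` only flips the sign of its singlet row, so `T = angU σ angUᴴ` is
fixed by conjugation with `diag(1, 1, 1, -1)`; an entry of `T` mixing the singlet with a triplet
state therefore equals its own negative. The remaining entries are a direct computation, and `T`
is Hermitian because `σ` is.
-/

open Matrix
open scoped RealInnerProductSpace Kronecker

def idx : Fin 4 → Fin 2 × Fin 2 := ![(0, 0), (0, 1), (1, 0), (1, 1)]

def kron4 (A B : Matrix (Fin 2) (Fin 2) ℂ) : Matrix (Fin 4) (Fin 4) ℂ :=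
  Matrix.of fun i j => A (idx i).1 (idx j).1 * B (idx i).2 (idx j).2

/-- The unitary mapping the computational basis (00, 01, 10, 11) to the angular-momentum
basis `{|11⟩, |10⟩, |1−1⟩, |00⟩}`. -/
noncomputable def angU : Matrix (Fin 4) (Fin 4) ℂ :=
  !![1, 0, 0, 0;
     0, (1 / Real.sqrt 2 : ℝ), (1 / Real.sqrt 2 : ℝ), 0;
     0, 0, 0, 1;
     0, (1 / Real.sqrt 2 : ℝ), (-(1 / Real.sqrt 2) : ℝ), 0]

lemma blochMat_eq (p : EuclideanSpace ℝ (Fin 3)) : blochMat p =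
    !![(1 + (p 2 : ℂ)) / 2, ((p 0 : ℂ) - (p 1 : ℂ) * Complex.I) / 2;
       ((p 0 : ℂ) + (p 1 : ℂ) * Complex.I) / 2, (1 - (p 2 : ℂ)) / 2] := by
  ext i j
  fin_cases i <;> fin_cases j <;> simp [blochMat] <;> ring

lemma blochMat_isHermitian (p : EuclideanSpace ℝ (Fin 3)) : (blochMat p).IsHermitian := by
  ext i j
  fin_cases i <;> fin_cases j <;> simp [blochMat_eq, Complex.ext_iff]

lemma kron4_eq_submatrix_kronecker (A B : Matrix (Fin 2) (Fin 2) ℂ) :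
    kron4 A B = (A ⊗ₖ B).submatrix idx idx := rfl

lemma Matrix.IsHermitian.kron4 {A B : Matrix (Fin 2) (Fin 2) ℂ} (hA : A.IsHermitian)
    (hB : B.IsHermitian) : (kron4 A B).IsHermitian := by
  rw [kron4_eq_submatrix_kronecker]
  refine IsHermitian.submatrix ?_ idx
  rw [IsHermitian, conjTranspose_kronecker, hA.eq, hB.eq]

lemma kron4_apply (A B : Matrix (Fin 2) (Fin 2) ℂ) (i j : Fin 4) :
    kron4 A B i j = A (idx i).1 (idx j).1 * B (idx i).2 (idx j).2 := rfl

def swapMat : Matrix (Fin 4) (Fin 4) ℂ :=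
  !![1, 0, 0, 0; 0, 0, 1, 0; 0, 1, 0, 0; 0, 0, 0, 1]

def parityMat : Matrix (Fin 4) (Fin 4) ℂ := diagonal ![1, 1, 1, -1]

lemma swapMat_mul_kron4_mul_swapMat (A B : Matrix (Fin 2) (Fin 2) ℂ) :
    swapMat * kron4 A B * swapMat = kron4 B A := by
  ext i j
  simp only [mul_apply, Fin.sum_univ_four]
  fin_cases i <;> fin_cases j <;> simp [swapMat, kron4_apply, idx, mul_comm]

lemma swapMat_conjTranspose : swapMatᴴ = swapMat := by
  ext i j
  fin_cases i <;> fin_cases j <;> simp [swapMat]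

lemma parityMat_conjTranspose : parityMatᴴ = parityMat := by
  rw [parityMat, diagonal_conjTranspose]
  congr 1
  ext i; fin_cases i <;> simp

lemma angU_mul_swapMat : angU * swapMat = parityMat * angU := by
  ext i j
  fin_cases i <;> fin_cases j <;> simp [angU, swapMat, parityMat, mul_apply, Fin.sum_univ_four]

lemma parityMat_conj_angU_conj_of_swapMat_conj {M : Matrix (Fin 4) (Fin 4) ℂ}
    (hM : swapMat * M * swapMat = M) :
    parityMat * (angU * M * angUᴴ) * parityMat = angU * M * angUᴴ := by
  conv_rhs => rw [← hM]
  calc parityMat * (angU * M * angUᴴ) * parityMat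
      = (parityMat * angU) * M * (parityMat * angU)ᴴ := by
        rw [conjTranspose_mul, parityMat_conjTranspose]; simp only [Matrix.mul_assoc]
    _ = angU * (swapMat * M * swapMat) * angUᴴ := by
        rw [← angU_mul_swapMat, conjTranspose_mul, swapMat_conjTranspose]
        simp only [Matrix.mul_assoc]

lemma singlet_entries_eq_zero_of_parityMat_conj {T : Matrix (Fin 4) (Fin 4) ℂ}
    (hT : parityMat * T * parityMat = T) (j : Fin 4) (hj : j ≠ 3) : T 3 j = 0 ∧ T j 3 = 0 := by
  have hd : ![(1 : ℂ), 1, 1, -1] j = 1 := by fin_cases j <;> simp_all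
  have hd3 : ![(1 : ℂ), 1, 1, -1] 3 = -1 := rfl
  have h3j := congrFun (congrFun hT 3) j
  have hj3 := congrFun (congrFun hT j) 3
  simp only [parityMat, diagonal_mul, mul_diagonal, hd, hd3, one_mul, mul_one, neg_mul, mul_neg,
    CharZero.neg_eq_self_iff] at h3j hj3
  exact ⟨h3j, hj3⟩

lemma angU_conj_eq (M : Matrix (Fin 4) (Fin 4) ℂ) : angU * M * angUᴴ =
    let c : ℂ := (Real.sqrt 2 : ℂ)⁻¹
    !![M 0 0, c * (M 0 1 + M 0 2), M 0 3, c * (M 0 1 - M 0 2);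
       c * (M 1 0 + M 2 0), (M 1 1 + M 1 2 + M 2 1 + M 2 2) / 2, c * (M 1 3 + M 2 3),
         (M 1 1 - M 1 2 + M 2 1 - M 2 2) / 2;
       M 3 0, c * (M 3 1 + M 3 2), M 3 3, c * (M 3 1 - M 3 2);
       c * (M 1 0 - M 2 0), (M 1 1 + M 1 2 - M 2 1 - M 2 2) / 2, c * (M 1 3 - M 2 3),
         (M 1 1 - M 1 2 - M 2 1 + M 2 2) / 2] := by
  have hc : ((Real.sqrt 2 : ℂ)⁻¹) ^ 2 = 1 / 2 := by
    rw [inv_pow, ← Complex.ofReal_pow, Real.sq_sqrt zero_le_two]; norm_num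
  ext i j
  simp only [mul_apply, Fin.sum_univ_four]
  fin_cases i <;> fin_cases j <;> simp [angU] <;> ring_nf <;> simp only [hc] <;> ring

/-- In the angular-momentum basis, the symmetrization `σ = (ρ_p ⊗ ρ_q + ρ_q ⊗ ρ_p)/2`
becomes block diagonal: the antisymmetric (fourth) row and column vanish except for the
(4,4) entry `(1 − ⟪p,q⟫)/4`, and the symmetric 3×3 block has the stated entries, the
remaining ones being determined by Hermiticity. -/
theorem symmetrized_state_block_diagonal (p q : EuclideanSpace ℝ (Fin 3))
    (σ T : Matrix (Fin 4) (Fin 4) ℂ)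
    (hσ : σ = (1 / 2 : ℂ) •
      (kron4 (blochMat p) (blochMat q) + kron4 (blochMat q) (blochMat p)))
    (hT : T = angU * σ * angUᴴ) :
    (T 3 0 = 0 ∧ T 3 1 = 0 ∧ T 3 2 = 0 ∧ T 0 3 = 0 ∧ T 1 3 = 0 ∧ T 2 3 = 0) ∧
    T 3 3 = (((1 - ⟪p, q⟫) / 4 : ℝ) : ℂ) ∧
    T 0 0 = (((1 + q 2) * (1 + p 2) / 4 : ℝ) : ℂ) ∧
    T 0 1 = (((q 0 : ℂ) - (q 1 : ℂ) * Complex.I) * (1 + (p 2 : ℂ))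
              + ((p 0 : ℂ) - (p 1 : ℂ) * Complex.I) * (1 + (q 2 : ℂ)))
            / (4 * (Real.sqrt 2 : ℂ)) ∧
    T 0 2 = ((p 0 : ℂ) - (p 1 : ℂ) * Complex.I) * ((q 0 : ℂ) - (q 1 : ℂ) * Complex.I) / 4 ∧
    T 1 1 = (((1 - p 2 * q 2 + p 0 * q 0 + p 1 * q 1) / 4 : ℝ) : ℂ) ∧
    T 1 2 = (((p 0 : ℂ) - (p 1 : ℂ) * Complex.I) * (1 - (q 2 : ℂ))
              + ((q 0 : ℂ) - (q 1 : ℂ) * Complex.I) * (1 - (p 2 : ℂ)))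
            / (4 * (Real.sqrt 2 : ℂ)) ∧
    T 2 2 = (((1 - q 2) * (1 - p 2) / 4 : ℝ) : ℂ) ∧
    Tᴴ = T := by
  have hswap : swapMat * σ * swapMat = σ := by
    rw [hσ, Matrix.mul_smul, Matrix.smul_mul, Matrix.mul_add, Matrix.add_mul,
      swapMat_mul_kron4_mul_swapMat, swapMat_mul_kron4_mul_swapMat, add_comm]
  have hherm : σ.IsHermitian := by
    rw [hσ]
    refine IsHermitian.smul ?_ (by simp [IsSelfAdjoint])
    exact ((blochMat_isHermitian p).kron4 (blochMat_isHermitian q)).add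
      ((blochMat_isHermitian q).kron4 (blochMat_isHermitian p))
  have hzero :=
    singlet_entries_eq_zero_of_parityMat_conj (hT ▸ parityMat_conj_angU_conj_of_swapMat_conj hswap)
  have hinner : ⟪p, q⟫ = p 0 * q 0 + p 1 * q 1 + p 2 * q 2 := by
    simp [PiLp.inner_apply, Fin.sum_univ_three]; ring
  refine ⟨⟨(hzero 0 (by decide)).1, (hzero 1 (by decide)).1,
    (hzero 2 (by decide)).1, (hzero 0 (by decide)).2,
    (hzero 1 (by decide)).2, (hzero 2 (by decide)).2⟩,
    ?_, ?_, ?_, ?_, ?_, ?_, ?_, hT ▸ isHermitian_mul_mul_conjTranspose angU hherm⟩ <;>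
  · subst hT hσ
    simp only [angU_conj_eq, Matrix.add_apply, Matrix.smul_apply, smul_eq_mul, kron4_apply, idx,
      blochMat_eq, of_apply, cons_val', cons_val_zero, cons_val_one, cons_val, cons_val_fin_one,
      hinner]
    push_cast
    field_simp
    ring_nf <;> simp only [Complex.I_sq] <;> ring
end

section
/- (Antipodal pairing of Multiaxial Representation roots) Let k ≥ 1 and let t : ℤ → ℂ, defined for −k ≤ q ≤ k, satisfy the Hermiticity condition conj(t q) = (−1)^q · t (−q). Define the polynomial P(Z) = ∑_{q=−k}^{k} √(Nat.choose (2k) (k+q)) · t q · Z^{k−q} over ℂ. Then for every nonzero z ∈ ℂ, P(z) = 0 if and only if P(−1/conj(z)) = 0. (Geometrically: if the direction (θ, φ) with z = tan(θ/2)e^{iφ} solves the MAR equation, so does the antipodal direction (π−θ, π+φ); hence the 2k roots of P constitute k axes.) -/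
open Finset

/-- (Antipodal pairing of Multiaxial Representation roots.) If the coefficients
`t q`, `−k ≤ q ≤ k`, satisfy the Hermiticity condition `conj(t q) = (−1)^q t(−q)`, then
for the MAR polynomial `P(Z) = ∑_{q=−k}^{k} √(C(2k, k+q)) t q Z^{k−q}` and any nonzero
`z ∈ ℂ`, `P(z) = 0` iff `P(−1/conj z) = 0`: the roots come in antipodal pairs, i.e. the
`2k` roots constitute `k` axes. -/
theorem mar_roots_antipodal_pairing (k : ℕ) (hk : 1 ≤ k) (t : ℤ → ℂ)
    (hherm : ∀ q : ℤ, -(k : ℤ) ≤ q → q ≤ k →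
      (starRingEnd ℂ) (t q) = (-1 : ℂ) ^ q * t (-q)) :
    ∀ z : ℂ, z ≠ 0 →
      ((∑ q ∈ Finset.Icc (-(k : ℤ)) (k : ℤ),
          (Real.sqrt (Nat.choose (2 * k) ((k : ℤ) + q).toNat) : ℂ) * t q
            * z ^ (((k : ℤ) - q).toNat)) = 0 ↔
        (∑ q ∈ Finset.Icc (-(k : ℤ)) (k : ℤ),
          (Real.sqrt (Nat.choose (2 * k) ((k : ℤ) + q).toNat) : ℂ) * t q
            * (-1 / (starRingEnd ℂ) z) ^ (((k : ℤ) - q).toNat)) = 0) := by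
  intro z hz
  set w := (starRingEnd ℂ) z with hwdef
  have hw0 : w ≠ 0 := by
    rw [hwdef, starRingEnd_apply]; exact star_ne_zero.mpr hz
  set S₁ := ∑ q ∈ Finset.Icc (-(k : ℤ)) (k : ℤ),
      (Real.sqrt (Nat.choose (2 * k) ((k : ℤ) + q).toNat) : ℂ) * t q
        * z ^ (((k : ℤ) - q).toNat) with hS1
  set S₂ := ∑ q ∈ Finset.Icc (-(k : ℤ)) (k : ℤ),
      (Real.sqrt (Nat.choose (2 * k) ((k : ℤ) + q).toNat) : ℂ) * t q
        * (-1 / w) ^ (((k : ℤ) - q).toNat) with hS2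
  have key : w ^ (2 * k) * S₂ = (-1 : ℂ) ^ k * (starRingEnd ℂ) S₁ := by
    rw [hS1, hS2, map_sum, Finset.mul_sum, Finset.mul_sum]
    refine Finset.sum_nbij' (fun q => -q) (fun q => -q) ?_ ?_ ?_ ?_ ?_
    · intro q hq
      simp only [Finset.mem_Icc] at hq ⊢
      omega
    · intro q hq
      simp only [Finset.mem_Icc] at hq ⊢
      omega
    · intro q _; ring
    · intro q _; ring
    · intro q hq
      simp only [Finset.mem_Icc] at hq
      obtain ⟨hq1, hq2⟩ := hq
      -- abbreviations
      set m := ((k : ℤ) - q).toNat with hm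
      set n := ((k : ℤ) + q).toNat with hn
      have hmn : n + m = 2 * k := by omega
      have hchoose : Nat.choose (2 * k) ((k : ℤ) + -q).toNat = Nat.choose (2 * k) n := by
        have h1 : ((k : ℤ) + -q).toNat = 2 * k - n := by omega
        rw [h1, Nat.choose_symm (by omega)]
      have hpow : ((k : ℤ) - -q).toNat = n := by omega
      rw [map_mul, map_mul, hchoose, hpow]
      have hconj_sqrt : (starRingEnd ℂ)
          ((Real.sqrt (Nat.choose (2 * k) n) : ℝ) : ℂ) =
          ((Real.sqrt (Nat.choose (2 * k) n) : ℝ) : ℂ) := Complex.conj_ofReal _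
      rw [hconj_sqrt]
      have hherm' : (starRingEnd ℂ) (t (-q)) = (-1 : ℂ) ^ (-q) * t q := by
        have := hherm (-q) (by omega) (by omega)
        simpa using this
      rw [hherm']
      have hconjz : (starRingEnd ℂ) (z ^ n) = w ^ n := by
        rw [map_pow]
      rw [hconjz]
      -- now pure algebra: w^(2k) * (√C * t q * (-1/w)^m) = (-1)^k * (√C * ((-1)^(-q) * t q) * w^n)
      have hsign : ((-1 : ℂ)) ^ m = (-1 : ℂ) ^ k * (-1 : ℂ) ^ (-q : ℤ) := by
        have h1 : ((-1 : ℂ)) ^ m = ((-1 : ℂ)) ^ (m : ℤ) := (zpow_natCast _ _).symm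
        have h2 : (m : ℤ) = (k : ℤ) + -q := by omega
        rw [h1, h2, zpow_add₀ (by norm_num : (-1 : ℂ) ≠ 0), zpow_natCast]
      have hwpow : w ^ (2 * k) * ((-1) / w) ^ m = (-1 : ℂ) ^ m * w ^ n := by
        rw [div_pow, neg_one_pow_eq_pow_mod_two]
        rw [← hmn, pow_add]
        field_simp
      calc w ^ (2 * k) * ((Real.sqrt (Nat.choose (2 * k) n) : ℂ) * t q * (-1 / w) ^ m)
          = (Real.sqrt (Nat.choose (2 * k) n) : ℂ) * t q * (w ^ (2 * k) * ((-1) / w) ^ m) := by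
            ring
        _ = (Real.sqrt (Nat.choose (2 * k) n) : ℂ) * t q * ((-1 : ℂ) ^ m * w ^ n) := by
            rw [hwpow]
        _ = (-1 : ℂ) ^ k *
              ((Real.sqrt (Nat.choose (2 * k) n) : ℂ) * ((-1 : ℂ) ^ (-q : ℤ) * t q) * w ^ n) := by
            rw [hsign]; ring
  constructor
  · intro h
    have hc : (starRingEnd ℂ) S₁ = 0 := by rw [h, map_zero]
    have : w ^ (2 * k) * S₂ = 0 := by rw [key, hc, mul_zero]
    exact (mul_eq_zero.mp this).resolve_left (pow_ne_zero _ hw0)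
  · intro h
    have : (-1 : ℂ) ^ k * (starRingEnd ℂ) S₁ = 0 := by rw [← key, h, mul_zero]
    have hc : (starRingEnd ℂ) S₁ = 0 :=
      (mul_eq_zero.mp this).resolve_left (pow_ne_zero _ (by norm_num))
    exact (starRingEnd ℂ).injective (by simpa using hc)
end
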